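/- The straight-table ménage numbers U(n) = Σ_{k=0}^{n} (-1)^k (2n-k choose k)(n-k)! and round-table ménage numbers A(n) satisfy A(n) = U(n) - U(n-1) for n ≥ 2. -/

import Mathlib

/-- The straight-table ménage numbers, via the explicit formula. -/
def straightMenage (n : ℕ) : ℤ :=
  ∑ k ∈ Finset.range (n + 1),
    (-1 : ℤ) ^ k * (2 * n - k).choose k * (n - k).factorial

/-- The round-table ménage numbers: permutations `π` of `ℤ/nℤ` with
`π i ≠ i` and `π i ≠ i + 1` for all `i`. -/
noncomputable def menage (n : ℕ) : ℕ :=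
  Nat.card {π : Equiv.Perm (ZMod n) // ∀ i, π i ≠ i ∧ π i ≠ i + 1}

/-!
Read a permutation `π` of `ZMod n` as the placement of the `n` non-attacking rooks `(i, π i)`.
The `2 n` forbidden cells `(i, i)` and `(i, i + 1)`, listed in cyclic order, form a cycle in which
two cells share a row or a column exactly when they are neighbours. Inclusion–exclusion over sets
of forbidden cells therefore gives `A(n) = ∑ₖ (-1)ᵏ (n - k)! cₖ`, where `cₖ` counts the `k`-subsets
of a `2 n`-cycle without two neighbours. Splitting off one vertex of the cycle,
`cₖ = C(2n - k, k) + C(2n - k - 1, k - 1)`, and the two resulting sums are `U(n)` and `-U(n - 1)`.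
-/

open Finset

theorem Finset.inf_filter_univ {β ι : Type*} [Fintype β] [DecidableEq β] (I : Finset ι)
    (p : ι → β → Prop) [∀ i, DecidablePred (p i)] :
    (I.inf fun i ↦ ({x | p i x} : Finset β)) = ({x | ∀ i ∈ I, p i x} : Finset β) := by
  classical
  induction I using Finset.induction_on with
  | empty => simp
  | insert a I _ ih => ext; simp [ih]

section Rook

variable {α ι : Type*} {r s : ι → α}

theorem injOn_of_perm_through {S : Finset ι} (hcell : Set.InjOn (fun i ↦ (r i, s i)) S)
    {π : Equiv.Perm α} (hπ : ∀ i ∈ S, π (r i) = s i) : Set.InjOn r S ∧ Set.InjOn s S := by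
  refine ⟨fun a ha b hb h ↦ hcell ha hb ?_, fun a ha b hb h ↦ hcell ha hb ?_⟩
  · simp [h, ← hπ a ha, ← hπ b hb]
  · have : r a = r b := π.injective (by rw [hπ a ha, hπ b hb, h])
    simp [h, this]

variable [Fintype α] [DecidableEq α]

theorem card_perm_avoiding (r s : ι → α) (I : Finset ι) :
    (#{π : Equiv.Perm α | ∀ i ∈ I, π (r i) ≠ s i} : ℤ) =
      ∑ S ∈ I.powerset, (-1 : ℤ) ^ #S * #{π : Equiv.Perm α | ∀ i ∈ S, π (r i) = s i} := by
  have key := inclusion_exclusion_card_inf_compl I fun i ↦ {π : Equiv.Perm α | π (r i) = s i}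
  simpa only [compl_filter, inf_filter_univ] using key

/-- These permutations correspond to the bijections from the complement of the rows `r '' S` onto
the complement of the columns `s '' S`. -/
theorem card_perm_through_of_injOn {S : Finset ι} (hr : Set.InjOn r S) (hs : Set.InjOn s S) :
    #{π : Equiv.Perm α | ∀ i ∈ S, π (r i) = s i} = (Fintype.card α - #S).factorial := by
  classical
  let eR := Equiv.Set.imageOfInjOn r S hr
  let eS := Equiv.Set.imageOfInjOn s S hs
  have heR : ∀ i (hi : i ∈ S), eR.symm ⟨r i, i, hi, rfl⟩ = ⟨i, hi⟩ := fun i hi ↦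
    eR.symm_apply_eq.2 rfl
  have heS : ∀ i (hi : i ∈ S), (eS ⟨i, hi⟩ : α) = s i := fun _ _ ↦ rfl
  have through_iff (π : Equiv.Perm α) :
      (∀ i ∈ S, π (r i) = s i) ↔ ∀ x : r '' S, π x = (eR.symm.trans eS) x := by
    refine ⟨?_, fun h i hi ↦ by simpa [heR i hi, heS] using h ⟨r i, i, hi, rfl⟩⟩
    rintro h ⟨_, i, hi, rfl⟩
    simpa [heR i hi, heS] using h i hi
  have hcard (f : ι → α) (hf : Set.InjOn f S) : Fintype.card ((f '' S)ᶜ : Set α) =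
      Fintype.card α - #S := by
    rw [Fintype.card_compl_set, Fintype.card_congr (Equiv.Set.imageOfInjOn f S hf).symm]
    simp
  rw [← Fintype.card_subtype, Fintype.card_congr ((Equiv.subtypeEquivRight through_iff).trans
    (Equiv.Set.compl (eR.symm.trans eS))), ← hcard r hr,
    Fintype.card_equiv (Fintype.equivOfCardEq ((hcard r hr).trans (hcard s hs).symm))]

theorem card_perm_through_eq_zero {S : Finset ι} (hcell : Set.InjOn (fun i ↦ (r i, s i)) S)
    (h : ¬(Set.InjOn r S ∧ Set.InjOn s S)) :
    #{π : Equiv.Perm α | ∀ i ∈ S, π (r i) = s i} = 0 := by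
  rw [card_eq_zero, filter_eq_empty_iff]
  exact fun π _ hπ ↦ h (injOn_of_perm_through hcell hπ)

end Rook

def NoConsecutive (T : Finset ℕ) : Prop := ∀ j ∈ T, j + 1 ∉ T

instance : DecidablePred NoConsecutive := fun _ ↦ by unfold NoConsecutive; infer_instance

def NoCyclicConsecutive (m : ℕ) (T : Finset ℕ) : Prop :=
  NoConsecutive T ∧ ¬(0 ∈ T ∧ m - 1 ∈ T)

instance (m : ℕ) : DecidablePred (NoCyclicConsecutive m) := fun _ ↦ by
  unfold NoCyclicConsecutive; infer_instance

theorem noConsecutive_insert {t : ℕ} {U : Finset ℕ} (hU : ∀ j ∈ U, t < j) :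
    NoConsecutive (insert t U) ↔ NoConsecutive U ∧ t + 1 ∉ U := by
  have := hU t
  simp only [NoConsecutive, mem_insert]
  grind

theorem card_filter_powersetCard_succ_insert {γ : Type*} [DecidableEq γ] {t : γ} {s : Finset γ}
    (ht : t ∉ s) (Q : Finset γ → Prop) [DecidablePred Q] (k : ℕ) :
    #{T ∈ powersetCard (k + 1) (insert t s) | Q T} =
      #{T ∈ powersetCard (k + 1) s | Q T} + #{U ∈ powersetCard k s | Q (insert t U)} := by
  have hnot : ∀ U ∈ powersetCard k s, t ∉ U := fun U hU h ↦ ht ((mem_powersetCard.1 hU).1 h)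
  rw [powersetCard_succ_insert ht, filter_union, filter_image, card_union_of_disjoint,
    card_image_of_injOn]
  · intro U hU V hV h
    rw [← erase_insert (hnot U (mem_filter.1 hU).1), ← erase_insert (hnot V (mem_filter.1 hV).1)]
    exact congrArg (·.erase t) h
  · refine disjoint_left.2 fun T hT hT' ↦ ?_
    obtain ⟨U, hU, rfl⟩ := mem_image.1 hT'
    exact ht ((mem_powersetCard.1 (mem_filter.1 hT).1).1 (mem_insert_self t U))

theorem card_noConsecutive_Ico_succ {a b : ℕ} (hab : a < b) (k : ℕ) :
    #{T ∈ powersetCard (k + 1) (Ico a b) | NoConsecutive T} =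
      #{T ∈ powersetCard (k + 1) (Ico (a + 1) b) | NoConsecutive T} +
        #{T ∈ powersetCard k (Ico (a + 2) b) | NoConsecutive T} := by
  rw [← insert_Ico_add_one_left_eq_Ico hab,
    card_filter_powersetCard_succ_insert (by simp) NoConsecutive k]
  congr 2
  ext U
  have hIco : (Ico (a + 1) b).erase (a + 1) = Ico (a + 2) b := by ext; simp; omega
  simp only [mem_filter, mem_powersetCard, ← hIco, subset_erase]
  constructor
  · rintro ⟨⟨hU, rfl⟩, h⟩
    have := (noConsecutive_insert fun j hj ↦ (mem_Ico.1 (hU hj)).1).1 h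
    exact ⟨⟨⟨hU, this.2⟩, rfl⟩, this.1⟩
  · rintro ⟨⟨⟨hU, h1⟩, rfl⟩, h⟩
    exact ⟨⟨hU, rfl⟩, (noConsecutive_insert fun j hj ↦ (mem_Ico.1 (hU hj)).1).2 ⟨h, h1⟩⟩

/-- Thanks to truncated subtraction the formula also covers `b ≤ a`. -/
theorem card_noConsecutive_Ico (a b k : ℕ) :
    #{T ∈ powersetCard k (Ico a b) | NoConsecutive T} = (b + 1 - a - k).choose k := by
  match k with
  | 0 => rw [powersetCard_zero, filter_singleton, if_pos (by simp [NoConsecutive])]; simp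
  | k + 1 =>
    rcases lt_or_ge a b with hab | hba
    · rw [card_noConsecutive_Ico_succ hab, card_noConsecutive_Ico (a + 1) b (k + 1),
        card_noConsecutive_Ico (a + 2) b k]
      rcases Nat.eq_zero_or_pos (b - a - k) with h | h
      · rw [Nat.choose_eq_zero_of_lt (by omega : b + 1 - a - (k + 1) < k + 1),
          Nat.choose_eq_zero_of_lt (by omega : b + 1 - (a + 1) - (k + 1) < k + 1),
          Nat.choose_eq_zero_of_lt (by omega : b + 1 - (a + 2) - k < k)]
      · rw [show b + 1 - a - (k + 1) = (b + 1 - (a + 1) - (k + 1)) + 1 by omega,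
          show b + 1 - (a + 2) - k = b + 1 - (a + 1) - (k + 1) by omega, Nat.choose_succ_succ']
        ring
    · simp [Ico_eq_empty_of_le hba, show b + 1 - a - (k + 1) = 0 by omega]
termination_by b - a

theorem card_noCyclicConsecutive_range {m : ℕ} (hm : 2 ≤ m) (k : ℕ) :
    #{T ∈ powersetCard (k + 1) (range m) | NoCyclicConsecutive m T} =
      (m - (k + 1)).choose (k + 1) + (m - 2 - k).choose k := by
  rw [range_eq_Ico, ← insert_Ico_add_one_left_eq_Ico (by omega : 0 < m),
    card_filter_powersetCard_succ_insert (by simp) _ k, zero_add]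
  have avoid_zero : {T ∈ powersetCard (k + 1) (Ico 1 m) | NoCyclicConsecutive m T} =
      {T ∈ powersetCard (k + 1) (Ico 1 m) | NoConsecutive T} := by
    refine filter_congr fun T hT ↦ ⟨And.left, fun h ↦ ⟨h, fun h0 ↦ ?_⟩⟩
    simpa using (mem_powersetCard.1 hT).1 h0.1
  have contain_zero : {U ∈ powersetCard k (Ico 1 m) | NoCyclicConsecutive m (insert 0 U)} =
      {U ∈ powersetCard k (Ico 2 (m - 1)) | NoConsecutive U} := by
    ext U
    have hIco : ((Ico 1 m).erase 1).erase (m - 1) = Ico 2 (m - 1) := by ext; simp; omega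
    have hins (hU : U ⊆ Ico 1 m) : NoConsecutive (insert 0 U) ↔ NoConsecutive U ∧ 1 ∉ U :=
      noConsecutive_insert fun j hj ↦ (mem_Ico.1 (hU hj)).1
    have hm1 : m - 1 ≠ 0 := by omega
    simp only [NoCyclicConsecutive, mem_filter, mem_powersetCard, ← hIco, subset_erase,
      mem_insert, true_or, true_and]
    grind
  rw [avoid_zero, contain_zero, card_noConsecutive_Ico, card_noConsecutive_Ico]
  congr 2

theorem ZMod.natCast_eq_natCast_iff_of_le {n x y : ℕ} (hx : x ≤ n) (hy : y ≤ n) :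
    (x : ZMod n) = y ↔ x = y ∨ x = 0 ∧ y = n ∨ x = n ∧ y = 0 := by
  rw [ZMod.natCast_eq_natCast_iff']
  rcases hx.lt_or_eq with hx | rfl <;> rcases hy.lt_or_eq with hy | rfl <;>
    simp [Nat.mod_eq_of_lt, *] <;> omega

/-- The forbidden cells listed along the cycle `(0, 0), (0, 1), (1, 1), (1, 2), …, (n - 1, 0)`:
the `j`-th one is `(j / 2, (j + 1) / 2)`, so that neighbouring cells share a row or a column. -/
def menageRow (n j : ℕ) : ZMod n := (j / 2 : ℕ)

def menageCol (n j : ℕ) : ZMod n := ((j + 1) / 2 : ℕ)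

section MenageBoard

variable {n : ℕ}

theorem menageRow_two_mul (i : ℕ) : menageRow n (2 * i) = i := by simp [menageRow]

theorem menageCol_two_mul (i : ℕ) : menageCol n (2 * i) = i := by
  simp [menageCol, show (2 * i + 1) / 2 = i by omega]

theorem menageRow_two_mul_add_one (i : ℕ) : menageRow n (2 * i + 1) = i := by
  simp [menageRow, show (2 * i + 1) / 2 = i by omega]

theorem menageCol_two_mul_add_one (i : ℕ) : menageCol n (2 * i + 1) = i + 1 := by
  simp [menageCol, show (2 * i + 1 + 1) / 2 = i + 1 by omega]

theorem avoids_menageBoard_iff [NeZero n] (π : Equiv.Perm (ZMod n)) :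
    (∀ i, π i ≠ i ∧ π i ≠ i + 1) ↔ ∀ j ∈ range (2 * n), π (menageRow n j) ≠ menageCol n j := by
  constructor
  · intro h j _
    obtain ⟨i, rfl | rfl⟩ := Nat.even_or_odd' j
    · simpa [menageRow_two_mul, menageCol_two_mul] using (h i).1
    · simpa [menageRow_two_mul_add_one, menageCol_two_mul_add_one] using (h i).2
  · intro h i
    have hi := i.val_lt
    rw [← ZMod.natCast_zmod_val i]
    refine ⟨?_, ?_⟩
    · simpa [menageRow_two_mul, menageCol_two_mul] using h (2 * i.val) (by simp; omega)
    · simpa [menageRow_two_mul_add_one, menageCol_two_mul_add_one] using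
        h (2 * i.val + 1) (by simp; omega)

theorem menageRow_eq_iff {a b : ℕ} (ha : a < 2 * n) (hb : b < 2 * n) :
    menageRow n a = menageRow n b ↔ a / 2 = b / 2 := by
  rw [menageRow, menageRow, ZMod.natCast_eq_natCast_iff_of_le (by omega) (by omega)]
  omega

theorem menageCol_eq_iff {a b : ℕ} (ha : a < 2 * n) (hb : b < 2 * n) :
    menageCol n a = menageCol n b ↔
      (a + 1) / 2 = (b + 1) / 2 ∨ a = 0 ∧ b = 2 * n - 1 ∨ a = 2 * n - 1 ∧ b = 0 := by
  rw [menageCol, menageCol, ZMod.natCast_eq_natCast_iff_of_le (by omega) (by omega)]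
  omega

theorem injOn_menageCell (hn : 2 ≤ n) :
    Set.InjOn (fun j ↦ (menageRow n j, menageCol n j)) (range (2 * n)) := by
  intro a ha b hb h
  simp only [coe_range, Set.mem_Iio] at ha hb
  simp only [Prod.mk.injEq, menageRow_eq_iff ha hb, menageCol_eq_iff ha hb] at h
  omega

theorem injOn_menageRow_and_menageCol_iff {S : Finset ℕ} (hS : S ⊆ range (2 * n)) :
    Set.InjOn (menageRow n) S ∧ Set.InjOn (menageCol n) S ↔ NoCyclicConsecutive (2 * n) S := by
  have hlt : ∀ a ∈ S, a < 2 * n := fun a ha ↦ mem_range.1 (hS ha)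
  constructor
  · rintro ⟨hrow, hcol⟩
    refine ⟨fun j hj hj1 ↦ ?_, fun ⟨h0, hlast⟩ ↦ ?_⟩
    · by_cases hpar : j % 2 = 0
      · have := hrow hj hj1 ((menageRow_eq_iff (hlt _ hj) (hlt _ hj1)).2 (by omega))
        omega
      · have := hcol hj hj1 ((menageCol_eq_iff (hlt _ hj) (hlt _ hj1)).2 (by omega))
        omega
    · have := hcol h0 hlast ((menageCol_eq_iff (hlt _ h0) (hlt _ hlast)).2 (by omega))
      have := hlt _ h0
      omega
  · rintro ⟨hsp, hcyc⟩
    have adjacent : ∀ a ∈ S, ∀ b ∈ S, a < b → b ≠ a + 1 ∧ ¬(a = 0 ∧ b = 2 * n - 1) :=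
      fun a ha b hb _ ↦ ⟨fun h ↦ hsp a ha (h ▸ hb), fun ⟨h0, h1⟩ ↦ hcyc ⟨h0 ▸ ha, h1 ▸ hb⟩⟩
    constructor <;> intro a ha b hb h
    · rw [menageRow_eq_iff (hlt _ ha) (hlt _ hb)] at h
      rcases lt_trichotomy a b with hab | rfl | hab
      · have := adjacent a ha b hb hab; omega
      · rfl
      · have := adjacent b hb a ha hab; omega
    · rw [menageCol_eq_iff (hlt _ ha) (hlt _ hb)] at h
      rcases lt_trichotomy a b with hab | rfl | hab
      · have := adjacent a ha b hb hab; omega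
      · rfl
      · have := adjacent b hb a ha hab; omega

theorem card_perm_through_menageCell [NeZero n] (hn : 2 ≤ n) {S : Finset ℕ}
    (hS : S ⊆ range (2 * n)) :
    #{π : Equiv.Perm (ZMod n) | ∀ j ∈ S, π (menageRow n j) = menageCol n j} =
      if NoCyclicConsecutive (2 * n) S then (n - #S).factorial else 0 := by
  split_ifs with h
  · obtain ⟨hrow, hcol⟩ := (injOn_menageRow_and_menageCol_iff hS).2 h
    rw [card_perm_through_of_injOn hrow hcol, ZMod.card]
  · exact card_perm_through_eq_zero ((injOn_menageCell hn).mono (coe_subset.2 hS))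
      (mt (injOn_menageRow_and_menageCol_iff hS).1 h)

end MenageBoard

theorem straightMenage_eq_sum_range {n N : ℕ} (h : n < N) :
    straightMenage n = ∑ k ∈ range N, (-1 : ℤ) ^ k * (2 * n - k).choose k * (n - k).factorial := by
  refine sum_subset (range_subset_range.2 h) fun k _ hk ↦ ?_
  rw [Nat.choose_eq_zero_of_lt (by simp at hk; omega)]
  simp

theorem sum_powersetCard_menageBoard {n : ℕ} [NeZero n] (hn : 2 ≤ n) (k : ℕ) :
    ∑ S ∈ powersetCard k (range (2 * n)), (-1 : ℤ) ^ #S *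
        #{π : Equiv.Perm (ZMod n) | ∀ j ∈ S, π (menageRow n j) = menageCol n j} =
      (-1) ^ k * (n - k).factorial *
        #{S ∈ powersetCard k (range (2 * n)) | NoCyclicConsecutive (2 * n) S} := by
  rw [card_filter, Nat.cast_sum, mul_sum]
  refine sum_congr rfl fun S hS ↦ ?_
  obtain ⟨hsub, rfl⟩ := mem_powersetCard.1 hS
  rw [card_perm_through_menageCell hn hsub]
  split_ifs <;> simp

theorem sum_card_noCyclicConsecutive_eq {n : ℕ} (hn : 2 ≤ n) :
    ∑ k ∈ range (2 * n + 1), (-1 : ℤ) ^ k * (n - k).factorial *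
        #{S ∈ powersetCard k (range (2 * n)) | NoCyclicConsecutive (2 * n) S} =
      straightMenage n - straightMenage (n - 1) := by
  rw [straightMenage_eq_sum_range (by omega : n < 2 * n + 1),
    straightMenage_eq_sum_range (by omega : n - 1 < 2 * n), sum_range_succ', sum_range_succ',
    add_sub_right_comm, ← sum_sub_distrib]
  congr 1
  · refine sum_congr rfl fun k _ ↦ ?_
    rw [card_noCyclicConsecutive_range (by omega), show 2 * (n - 1) - k = 2 * n - 2 - k by omega,
      show n - 1 - k = n - (k + 1) by omega]
    push_cast
    ring
  · rw [powersetCard_zero, filter_singleton, if_pos (by simp [NoCyclicConsecutive, NoConsecutive])]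
    simp

theorem menage_eq_straight_sub (n : ℕ) (hn : 2 ≤ n) :
    (menage n : ℤ) = straightMenage n - straightMenage (n - 1) := by
  have : NeZero n := ⟨by omega⟩
  rw [menage, Nat.card_eq_fintype_card, Fintype.card_subtype,
    filter_congr fun π _ ↦ avoids_menageBoard_iff π, card_perm_avoiding, sum_powerset, card_range,
    ← sum_card_noCyclicConsecutive_eq hn]
  exact sum_congr rfl fun k _ ↦ sum_powersetCard_menageBoard hn k
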